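/- arXiv:2311.01453 — 2 statements merged into one kernel-verified Lean document; each statement's English description precedes it below -/
import Mathlib

section
/- Let X and W be square-integrable real random variables (W representing f-predictions) and r ≥ 0. The variance of the estimator combining the classical part and correction, namely λ² r Var(W) + Var(X − λW), viewed as a function of λ ∈ ℝ, is minimized at λ* = Cov(X, W)/((1+r)Var(W)) provided Var(W) > 0, with minimal value Var(X) − Cov(X,W)²/((1+r)Var(W)). -/
open MeasureTheory ProbabilityTheory

/-- Optimal power tuning for mean estimation: `λ ↦ λ²r·Var(W) + Var(X − λW)`
is minimized at `λ* = Cov(X,W)/((1+r)Var(W))`, with minimal value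
`Var(X) − Cov(X,W)²/((1+r)Var(W))`. -/
theorem optimal_lambda_scalar
    {Ω : Type*} [MeasurableSpace Ω] (μ : Measure Ω) [IsProbabilityMeasure μ]
    (X W : Ω → ℝ) (hX : MemLp X 2 μ) (hW : MemLp W 2 μ)
    (r : ℝ) (hr : 0 ≤ r) (hVarW : 0 < variance W μ)
    (cov : ℝ)
    (hcov : cov = ∫ ω, (X ω - ∫ ω', X ω' ∂μ) * (W ω - ∫ ω', W ω' ∂μ) ∂μ)
    (g : ℝ → ℝ)
    (hg : ∀ lam, g lam =
      lam ^ 2 * r * variance W μ + variance (fun ω => X ω - lam * W ω) μ)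
    (lamStar : ℝ) (hlamStar : lamStar = cov / ((1 + r) * variance W μ)) :
    IsMinOn g Set.univ lamStar ∧
      g lamStar = variance X μ - cov ^ 2 / ((1 + r) * variance W μ) := by
  have hXi : Integrable X μ := hX.integrable one_le_two
  have hWi : Integrable W μ := hW.integrable one_le_two
  set mX := ∫ ω', X ω' ∂μ with hmX
  set mW := ∫ ω', W ω' ∂μ with hmW
  have hXc : MemLp (fun ω => X ω - mX) 2 μ := hX.sub (memLp_const mX)
  have hWc : MemLp (fun ω => W ω - mW) 2 μ := hW.sub (memLp_const mW)
  have hXc2 : Integrable (fun ω => (X ω - mX) ^ 2) μ := hXc.integrable_sq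
  have hWc2 : Integrable (fun ω => (W ω - mW) ^ 2) μ := hWc.integrable_sq
  have hS2 : Integrable (fun ω => ((X ω - mX) + (W ω - mW)) ^ 2) μ :=
    (hXc.add hWc).integrable_sq
  have hprod : Integrable (fun ω => (X ω - mX) * (W ω - mW)) μ := by
    have : (fun ω => (X ω - mX) * (W ω - mW)) =
        fun ω => (((X ω - mX) + (W ω - mW)) ^ 2 - (X ω - mX) ^ 2 - (W ω - mW) ^ 2) / 2 := by
      funext ω; ring
    rw [this]
    exact ((hS2.sub hXc2).sub hWc2).div_const 2
  have hVX : variance X μ = ∫ ω, (X ω - mX) ^ 2 ∂μ := by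
    rw [variance_eq_integral hX.aestronglyMeasurable.aemeasurable]
  have hVW : variance W μ = ∫ ω, (W ω - mW) ^ 2 ∂μ := by
    rw [variance_eq_integral hW.aestronglyMeasurable.aemeasurable]
  -- key quadratic formula
  have key : ∀ lam : ℝ, g lam =
      (1 + r) * variance W μ * lam ^ 2 - 2 * cov * lam + variance X μ := by
    intro lam
    have hXlW : MemLp (fun ω => X ω - lam * W ω) 2 μ := hX.sub (hW.const_mul lam)
    have hmean : (∫ ω, (X ω - lam * W ω) ∂μ) = mX - lam * mW := by
      rw [integral_sub hXi (hWi.const_mul lam), integral_const_mul]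
    have hv : variance (fun ω => X ω - lam * W ω) μ =
        ∫ ω, ((X ω - mX) - lam * (W ω - mW)) ^ 2 ∂μ := by
      rw [variance_eq_integral hXlW.aestronglyMeasurable.aemeasurable]
      congr 1
      funext ω
      simp only [Pi.pow_apply, Pi.sub_apply, hmean]
      ring
    have hsplit : (∫ ω, ((X ω - mX) - lam * (W ω - mW)) ^ 2 ∂μ) =
        (∫ ω, (X ω - mX) ^ 2 ∂μ)
          - (2 * lam) * ∫ ω, (X ω - mX) * (W ω - mW) ∂μ
          + lam ^ 2 * ∫ ω, (W ω - mW) ^ 2 ∂μ := by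
      have heq : (fun ω => ((X ω - mX) - lam * (W ω - mW)) ^ 2) =
          fun ω => ((X ω - mX) ^ 2 - (2 * lam) * ((X ω - mX) * (W ω - mW)))
            + lam ^ 2 * (W ω - mW) ^ 2 := by
        funext ω; ring
      have hI1 : Integrable
          (fun ω => (X ω - mX) ^ 2 - 2 * lam * ((X ω - mX) * (W ω - mW))) μ :=
        hXc2.sub (hprod.const_mul _)
      have hI2 : Integrable (fun ω => lam ^ 2 * (W ω - mW) ^ 2) μ := hWc2.const_mul _
      rw [heq]
      rw [integral_add hI1 hI2, integral_sub hXc2 (hprod.const_mul _),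
        integral_const_mul, integral_const_mul]
    rw [hg lam, hv, hsplit, ← hVX, ← hVW, ← hcov]
    ring
  set a : ℝ := (1 + r) * variance W μ with ha_def
  have ha : 0 < a := mul_pos (by linarith) hVarW
  have hgstar : g lamStar = variance X μ - cov ^ 2 / a := by
    rw [key, hlamStar]
    field_simp
    ring
  refine ⟨?_, hgstar⟩
  intro lam _
  simp only [Set.mem_setOf_eq]
  rw [hgstar, key]
  have h3 : a * lam ^ 2 - 2 * cov * lam + cov ^ 2 / a = (a * lam - cov) ^ 2 / a := by
    field_simp
    ring
  have h4 : 0 ≤ (a * lam - cov) ^ 2 / a := div_nonneg (sq_nonneg _) ha.le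
  linarith
end

section
/- Let L : ℝ^d → ℝ be convex with unique minimizer θ*, and suppose for some ε > 0 and δ > 0 that L(θ) − L(θ*) ≥ δ for all θ with ‖θ − θ*‖ = ε. Then for any convex function M : ℝ^d → ℝ with sup_{‖θ−θ*‖ ≤ ε}|M(θ) − L(θ)| < δ/2, every θ with ‖θ − θ*‖ ≥ ε satisfies M(θ) > M(θ*); in particular any minimizer of M lies in the open ball of radius ε around θ*. -/
/-- Deterministic core of the consistency proof: if `L` is convex with unique
minimizer `θ*` and margin `δ` on the `ε`-sphere, then any convex `M` that is
uniformly `δ/2`-close to `L` on the `ε`-ball satisfies `M(θ) > M(θ*)` outside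
the `ε`-ball; in particular every minimizer of `M` lies within distance `ε`
of `θ*`. -/
theorem consistency_deterministic_core {d : ℕ}
    (L : (Fin d → ℝ) → ℝ) (hL : ConvexOn ℝ Set.univ L)
    (θstar : Fin d → ℝ) (hmin : ∀ θ, θ ≠ θstar → L θstar < L θ)
    (ε δ : ℝ) (hε : 0 < ε) (hδ : 0 < δ)
    (hsphere : ∀ θ : Fin d → ℝ, ‖θ - θstar‖ = ε → δ ≤ L θ - L θstar)
    (M : (Fin d → ℝ) → ℝ) (hM : ConvexOn ℝ Set.univ M)
    (happrox : ∀ θ : Fin d → ℝ, ‖θ - θstar‖ ≤ ε → |M θ - L θ| < δ / 2) :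
    (∀ θ : Fin d → ℝ, ε ≤ ‖θ - θstar‖ → M θstar < M θ) ∧
      ∀ θm : Fin d → ℝ, (∀ θ, M θm ≤ M θ) → ‖θm - θstar‖ < ε := by
  have key : ∀ θ : Fin d → ℝ, ε ≤ ‖θ - θstar‖ → M θstar < M θ := by
    intro θ hθ
    have hn : (0:ℝ) < ‖θ - θstar‖ := lt_of_lt_of_le hε hθ
    set t : ℝ := ε / ‖θ - θstar‖ with ht
    have ht0 : 0 < t := div_pos hε hn
    have ht1 : t ≤ 1 := (div_le_one hn).2 hθ
    set θ1 : Fin d → ℝ := θstar + t • (θ - θstar) with hθ1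
    have hnorm : ‖θ1 - θstar‖ = ε := by
      have : θ1 - θstar = t • (θ - θstar) := by simp [hθ1]
      rw [this, norm_smul, Real.norm_eq_abs, abs_of_pos ht0]
      rw [ht, div_mul_cancel₀ _ hn.ne']
    -- convexity of M gives M θ1 ≤ (1-t) M θstar + t M θ
    have hconv : M θ1 ≤ (1 - t) * M θstar + t * M θ := by
      have := hM.2 (Set.mem_univ θstar) (Set.mem_univ θ)
        (by linarith : (0:ℝ) ≤ 1 - t) (le_of_lt ht0) (by ring)
      have heq : (1 - t) • θstar + t • θ = θ1 := by
        simp only [hθ1, smul_sub]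
        module
      simpa [heq, smul_eq_mul] using this
    -- M θ1 - M θstar > 0
    have h1 := happrox θ1 (le_of_eq hnorm)
    have h2 := happrox θstar (by simp [le_of_lt hε])
    have h3 := hsphere θ1 hnorm
    have habs1 : M θ1 - L θ1 > -(δ/2) := neg_lt_of_abs_lt h1
    have habs2 : M θstar - L θstar < δ/2 := lt_of_abs_lt h2
    have hpos : M θstar < M θ1 := by linarith
    nlinarith [mul_pos ht0 (sub_pos.2 hpos)]
  refine ⟨key, fun θm hθm => ?_⟩
  by_contra h
  push_neg at h
  exact absurd (hθm θstar) (not_le.2 (key θm h))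
end
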